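/- arXiv:1607.01204 — 2 statements merged into one kernel-verified Lean document; each statement's English description precedes it below -/
import Mathlib

section
/- Let N be a planar nearring with D(N) nontrivial. Then the set of zero multipliers K = MΦ* forms a (two-sided) nearring ideal of N. -/
class RightNearring (N : Type*) extends AddGroup N, Mul N where
  mul_assoc : ∀ a b c : N, a * b * c = a * (b * c)
  right_distrib : ∀ a b c : N, (a + b) * c = a * c + b * c

/-- `a` and `b` are equivalent multipliers: `x*a = x*b` for all `x`. -/
def EquivMult {N : Type*} [Mul N] (a b : N) : Prop := ∀ x : N, x * a = x * b

class PlanarNearring (N : Type*) extends RightNearring N where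
  three_classes : ∃ a b c : N, ¬ EquivMult a b ∧ ¬ EquivMult b c ∧ ¬ EquivMult a c
  planar : ∀ a b c : N, ¬ EquivMult a b → ∃! x : N, x * a = x * b + c

/-- The set of distributive elements of a right nearring. -/
def DSet (N : Type*) [RightNearring N] : Set N :=
  {d | ∀ a b : N, d * (a + b) = d * a + d * b}

/-- The set of zero multipliers of a right nearring. -/
def ZM (N : Type*) [RightNearring N] : Set N := {n | ∀ a : N, a * n = 0}

/-- The generalized centre. -/
def GC (N : Type*) [RightNearring N] : Set N := {n | ∀ d ∈ DSet N, n * d = d * n}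

/-- The orbit of `d` under `Φ`, together with `0`. -/
def orbitZ (Φ : Type*) {N : Type*} [SMul Φ N] [Zero N] (d : N) : Set N :=
  {x | x = 0 ∨ ∃ φ : Φ, φ • d = x}

/-- A planar nearring presented by a fixed point free automorphism group `Φ`,
orbit representatives `R` and zero-multiplier representatives `M ⊆ R`. -/
structure FerreroStructure (Φ N : Type*) [Group Φ] [PlanarNearring N]
    [DistribMulAction Φ N] where
  fpf : ∀ φ : Φ, φ ≠ 1 → ∀ n : N, φ • n = n → n = 0
  reg : ∀ φ : Φ, φ ≠ 1 → Function.Bijective (fun n : N => -n + φ • n)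
  R : Set N
  M : Set N
  M_sub : M ⊆ R
  zero_not_mem : (0 : N) ∉ R
  rep : N → N
  aut : N → Φ
  rep_mem : ∀ n : N, n ≠ 0 → rep n ∈ R
  decomp : ∀ n : N, n ≠ 0 → aut n • rep n = n
  unique : ∀ n : N, n ≠ 0 → ∀ r ∈ R, ∀ φ : Φ, φ • r = n → r = rep n ∧ φ = aut n
  mul_eq : ∀ a b : N, b ≠ 0 → rep b ∉ M → a * b = aut b • a
  mul_zm : ∀ a b : N, b ≠ 0 → rep b ∈ M → a * b = 0

section Aux
variable {Φ N : Type*} [Group Φ] [PlanarNearring N] [DistribMulAction Φ N]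

lemma zm_zero_mul (b : N) : (0 : N) * b = 0 := by
  have h : (0 : N) * b + 0 * b = 0 * b + 0 := by
    rw [← RightNearring.right_distrib, add_zero, add_zero]
  exact add_left_cancel h

lemma zm_mul_zero (a : N) : a * (0 : N) = 0 := by
  obtain ⟨p, q, c, hpq, -, -⟩ := PlanarNearring.three_classes (N := N)
  obtain ⟨x, -, hun⟩ := PlanarNearring.planar p q 0 hpq
  have h0 : (0 : N) * p = 0 * q + 0 := by rw [zm_zero_mul, zm_zero_mul, add_zero]
  have hy : ∀ n : N, (a * 0) * n = a * 0 := fun n => by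
    rw [RightNearring.mul_assoc, zm_zero_mul]
  have hy2 : (a * 0) * p = (a * 0) * q + 0 := by rw [hy, hy, add_zero]
  exact (hun _ hy2).trans (hun _ h0).symm

lemma zm_smul_ne_zero (φ : Φ) {d : N} (hd : d ≠ 0) : φ • d ≠ 0 := by
  intro h
  apply hd
  have := congrArg (fun x => φ⁻¹ • x) h
  simpa using this

lemma zm_mem_of (S : FerreroStructure Φ N) {d : N} (hd0 : d ≠ 0)
    {x : N} (hx : d * x = 0) : x ∈ ZM N := by
  by_cases h0 : x = 0
  · subst h0; intro a; exact zm_mul_zero a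
  by_cases hM : S.rep x ∈ S.M
  · intro a; exact S.mul_zm a x h0 hM
  · exact absurd hx (by rw [S.mul_eq d x h0 hM]; exact zm_smul_ne_zero _ hd0)

lemma zm_neg (S : FerreroStructure Φ N) {d : N} (hd : d ∈ DSet N) (hd0 : d ≠ 0)
    {k : N} (hk : k ∈ ZM N) : -k ∈ ZM N := by
  apply zm_mem_of S hd0
  have h := hd k (-k)
  rw [add_neg_cancel, zm_mul_zero, hk d, zero_add] at h
  exact h.symm

lemma zm_mul_add_zm (S : FerreroStructure Φ N) {d : N} (hd : d ∈ DSet N) (hd0 : d ≠ 0)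
    {k : N} (hk : k ∈ ZM N) (n m : N) : n * (m + k) = n * m := by
  by_cases hm : m = 0
  · subst hm; rw [zero_add, hk n, zm_mul_zero]
  by_cases hmk : m + k = 0
  · have hmval : m = -k := eq_neg_of_add_eq_zero_left hmk
    rw [hmk, zm_mul_zero, hmval, zm_neg S hd hd0 hk n]
  -- main case
  have hdk : d * (m + k) = d * m := by rw [hd m k, hk d, add_zero]
  by_cases hM : S.rep m ∈ S.M
  · have h1 : d * m = 0 := S.mul_zm d m hm hM
    have h2 : S.rep (m + k) ∈ S.M := by
      by_contra h
      rw [S.mul_eq d (m + k) hmk h, h1] at hdk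
      exact zm_smul_ne_zero _ hd0 hdk
    rw [S.mul_zm n (m + k) hmk h2, S.mul_zm n m hm hM]
  · have h1 : d * m = S.aut m • d := S.mul_eq d m hm hM
    have h2 : S.rep (m + k) ∉ S.M := by
      intro h
      rw [S.mul_zm d (m + k) hmk h, h1] at hdk
      exact zm_smul_ne_zero _ hd0 hdk.symm
    rw [S.mul_eq d (m + k) hmk h2, h1] at hdk
    have haut : S.aut (m + k) = S.aut m := by
      by_contra h
      have hne : (S.aut m)⁻¹ * S.aut (m + k) ≠ 1 := by
        intro h1'
        exact h (by rw [inv_mul_eq_one] at h1'; exact h1'.symm)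
      apply hd0
      apply S.fpf _ hne d
      rw [mul_smul, hdk, inv_smul_smul]
    rw [S.mul_eq n (m + k) hmk h2, S.mul_eq n m hm hM, haut]

end Aux

/-- if `D(N)` is nontrivial then the zero multipliers form a two-sided
nearring ideal of `N`. -/
theorem stmt9 {Φ N : Type*} [Group Φ] [PlanarNearring N] [DistribMulAction Φ N]
    (S : FerreroStructure Φ N) (hD : ∃ d ∈ DSet N, d ≠ 0) :
    (0 : N) ∈ ZM N ∧
    (∀ x ∈ ZM N, ∀ y ∈ ZM N, x + y ∈ ZM N) ∧
    (∀ x ∈ ZM N, -x ∈ ZM N) ∧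
    -- additively normal:
    (∀ n : N, ∀ k ∈ ZM N, n + k - n ∈ ZM N) ∧
    -- right ideal:
    (∀ k ∈ ZM N, ∀ n : N, k * n ∈ ZM N) ∧
    -- left ideal:
    (∀ k ∈ ZM N, ∀ n m : N, n * m - n * (m + k) ∈ ZM N) := by
  obtain ⟨d, hd, hd0⟩ := hD
  refine ⟨fun a => zm_mul_zero a, ?_, fun x hx => zm_neg S hd hd0 hx, ?_, ?_, ?_⟩
  · intro x hx y hy
    apply zm_mem_of S hd0
    rw [hd x y, hx d, hy d, add_zero]
  · intro n k hk
    apply zm_mem_of S hd0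
    have hneg : d * (-n) = -(d * n) := by
      have h := hd n (-n)
      rw [add_neg_cancel, zm_mul_zero] at h
      exact (neg_eq_of_add_eq_zero_right h.symm).symm
    rw [sub_eq_add_neg, hd (n + k) (-n), hd n k, hk d, add_zero, hneg, add_neg_cancel]
  · intro k hk n a
    rw [← RightNearring.mul_assoc, hk a, zm_zero_mul]
  · intro k hk n m
    rw [zm_mul_add_zm S hd hd0 hk n m, sub_self]
    exact fun a => zm_mul_zero a
end

section
/- Let N be a finite planar nearring with abelian addition and more than one Φ-orbit, in which every orbit aΦ* = aΦ ∪ {0} is additively closed. Then N is a vector space over a subfield of N, with Φ* isomorphic to the multiplicative group of that field. -/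
section Aux

variable {Φ N : Type*} [Group Φ] [PlanarNearring N] [DistribMulAction Φ N]

lemma zmul' (a : N) : (0 : N) * a = 0 := by
  have h : (0 : N) * a + 0 * a = 0 * a + 0 := by
    rw [← RightNearring.right_distrib, add_zero, add_zero]
  exact add_left_cancel h

lemma mulz' (n : N) : n * (0 : N) = 0 := by
  obtain ⟨a, b, c, hab1, -, -⟩ := PlanarNearring.three_classes (N := N)
  obtain ⟨x, -, hu⟩ := PlanarNearring.planar a b 0 hab1
  have h0 : (0 : N) * a = 0 * b + 0 := by rw [zmul', zmul', add_zero]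
  have hn : (n * 0) * a = (n * 0) * b + 0 := by
    rw [RightNearring.mul_assoc, RightNearring.mul_assoc, zmul' a, zmul' b, add_zero]
  rw [hu _ hn, hu _ h0]

lemma rep_smul (S : FerreroStructure Φ N) {n : N} (hn : n ≠ 0) (φ : Φ) :
    S.rep (φ • n) = S.rep n ∧ S.aut (φ • n) = φ * S.aut n := by
  have h0 : φ • n ≠ 0 := (smul_ne_zero_iff_ne φ).2 hn
  have h := S.unique (φ • n) h0 (S.rep n) (S.rep_mem n hn) (φ * S.aut n)
    (by rw [mul_smul, S.decomp n hn])
  exact ⟨h.1.symm, h.2.symm⟩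

lemma rep_mem_orbitZ (S : FerreroStructure Φ N) {n x : N} (hn : n ≠ 0)
    (hx : x ∈ orbitZ Φ n) (h0 : x ≠ 0) : S.rep x = S.rep n := by
  rcases hx with h | ⟨φ, rfl⟩
  · exact absurd h h0
  · exact (rep_smul S hn φ).1

lemma neg_mem_orbitZ [Finite N] {n : N}
    (hc : ∀ x ∈ orbitZ Φ n, ∀ y ∈ orbitZ Φ n, x + y ∈ orbitZ Φ n)
    {x : N} (hx : x ∈ orbitZ Φ n) : -x ∈ orbitZ Φ n := by
  rcases eq_or_ne x 0 with rfl | h0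
  · rw [neg_zero]; exact Or.inl rfl
  have hk : ∀ k : ℕ, (k + 1) • x ∈ orbitZ Φ n := by
    intro k
    induction k with
    | zero => simpa using hx
    | succ m ih => rw [succ_nsmul]; exact hc _ ih _ hx
  have h1 : addOrderOf x ≠ 1 := fun h => h0 (AddMonoid.addOrderOf_eq_one_iff.mp h)
  have hpos : 0 < addOrderOf x := addOrderOf_pos x
  obtain ⟨m, hm⟩ : ∃ m, addOrderOf x = m + 2 := ⟨addOrderOf x - 2, by omega⟩
  have hsum : (m + 1) • x + x = 0 := by
    rw [← succ_nsmul, ← hm]; exact addOrderOf_nsmul_eq_zero x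
  rw [neg_eq_of_add_eq_zero_left hsum]
  exact hk m

lemma key [Finite N] (S : FerreroStructure Φ N)
    (hab : ∀ x y : N, x + y = y + x)
    (horb : ∃ a b : N, a ≠ 0 ∧ b ≠ 0 ∧ S.rep a ≠ S.rep b)
    (hclosed : ∀ a : N, ∀ x ∈ orbitZ Φ a, ∀ y ∈ orbitZ Φ a, x + y ∈ orbitZ Φ a)
    (β γ : Φ) :
    (∀ n : N, β • n + γ • n = 0) ∨ ∃ δ : Φ, ∀ n : N, β • n + γ • n = δ • n := by
  letI : AddCommGroup N := { (inferInstance : AddGroup N) with add_comm := hab }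
  have hmem : ∀ n : N, β • n + γ • n ∈ orbitZ Φ n := by
    intro n
    rcases eq_or_ne n 0 with rfl | hn
    · simp only [smul_zero, add_zero]; exact Or.inl rfl
    · exact hclosed n _ (Or.inr ⟨β, rfl⟩) _ (Or.inr ⟨γ, rfl⟩)
  have hadd : ∀ x y : N,
      β • (x + y) + γ • (x + y) = (β • x + γ • x) + (β • y + γ • y) := by
    intro x y; rw [smul_add, smul_add]; abel
  have negmem : ∀ (n : N) {x : N}, x ∈ orbitZ Φ n → -x ∈ orbitZ Φ n :=
    fun n {x} hx => neg_mem_orbitZ (hclosed n) hx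
  have submem : ∀ (n : N) {x y : N}, x ∈ orbitZ Φ n → y ∈ orbitZ Φ n →
      x - y ∈ orbitZ Φ n := by
    intro n x y hx hy; rw [sub_eq_add_neg]; exact hclosed n _ hx _ (negmem n hy)
  have disj : ∀ a b x : N, a ≠ 0 → b ≠ 0 → S.rep a ≠ S.rep b →
      x ∈ orbitZ Φ a → x ∈ orbitZ Φ b → x = 0 := by
    intro a b x ha hb hr hxa hxb
    by_contra h0
    exact hr ((rep_mem_orbitZ S ha hxa h0).symm.trans (rep_mem_orbitZ S hb hxb h0))
  have hdec : ∀ n : N, n ≠ 0 → β • n + γ • n ≠ 0 → ∃ χ : Φ, β • n + γ • n = χ • n := by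
    intro n hn h0
    rcases hmem n with hz | ⟨χ, hχ⟩
    · exact absurd hz h0
    · exact ⟨χ, hχ.symm⟩
  have fpf' : ∀ (φ : Φ) (x : N), x ≠ 0 → φ • x = x → φ = 1 := by
    intro φ x hx hfix; by_contra hne; exact hx (S.fpf φ hne x hfix)
  have sumne : ∀ a a' : N, a ≠ 0 → a' ≠ 0 → S.rep a ≠ S.rep a' → a + a' ≠ 0 := by
    intro a a' ha ha' hr h0
    have hmm : a = -a' := eq_neg_of_add_eq_zero_left h0
    have h1 : a ∈ orbitZ Φ a' := by
      rw [hmm]; exact negmem a' (Or.inr ⟨1, one_smul _ _⟩)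
    exact ha (disj a a' a ha ha' hr (Or.inr ⟨1, one_smul _ _⟩) h1)
  have cross : ∀ (a a' : N) (δ δ' : Φ), a ≠ 0 → a' ≠ 0 → S.rep a ≠ S.rep a' →
      β • a + γ • a = δ • a → β • a' + γ • a' = δ' • a' → δ = δ' := by
    intro a a' δ δ' ha ha' hr hd hd'
    have hval : β • (a + a') + γ • (a + a') = δ • a + δ' • a' := by
      rw [hadd, hd, hd']
    rcases hmem (a + a') with hz | ⟨ε, hε⟩
    · exfalso
      have h1 : δ • a = -(δ' • a') := eq_neg_of_add_eq_zero_left (hval ▸ hz)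
      have h2 : δ • a ∈ orbitZ Φ a' := by
        rw [h1]; exact negmem a' (Or.inr ⟨δ', rfl⟩)
      have h3 : δ • a = 0 := disj a a' _ ha ha' hr (Or.inr ⟨δ, rfl⟩) h2
      exact ha ((smul_eq_zero_iff_eq δ).1 h3)
    · have heq : ε • a + ε • a' = δ • a + δ' • a' := by
        rw [← smul_add, hε, hval]
      have h2 : δ • a - ε • a = ε • a' - δ' • a' := by
        rw [sub_eq_sub_iff_add_eq_add, ← heq]; abel
      have hL : δ • a - ε • a ∈ orbitZ Φ a :=
        submem a (Or.inr ⟨δ, rfl⟩) (Or.inr ⟨ε, rfl⟩)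
      have hR : δ • a - ε • a ∈ orbitZ Φ a' := by
        rw [h2]; exact submem a' (Or.inr ⟨ε, rfl⟩) (Or.inr ⟨δ', rfl⟩)
      have h0 : δ • a - ε • a = 0 := disj a a' _ ha ha' hr hL hR
      have h0' : ε • a' - δ' • a' = 0 := by rw [← h2, h0]
      have hδ : δ = ε := by
        have he1 : δ • a = ε • a := sub_eq_zero.mp h0
        have hxx : (ε⁻¹ * δ) • a = a := by rw [mul_smul, he1, inv_smul_smul]
        have h1 := fpf' _ a ha hxx
        rw [inv_mul_eq_one] at h1; exact h1.symm
      have hδ' : δ' = ε := by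
        have he2 : ε • a' = δ' • a' := sub_eq_zero.mp h0'
        have hxx : (δ'⁻¹ * ε) • a' = a' := by rw [mul_smul, he2, inv_smul_smul]
        have h1 := fpf' _ a' ha' hxx
        rwa [inv_mul_eq_one] at h1
      exact hδ.trans hδ'.symm
  have zspread : ∀ a a' : N, a ≠ 0 → a' ≠ 0 → S.rep a ≠ S.rep a' →
      β • a + γ • a = 0 → β • a' + γ • a' = 0 := by
    intro a a' ha ha' hr hz
    by_contra hnz
    obtain ⟨δ', hδ'⟩ := hdec a' ha' hnz
    have hval : β • (a + a') + γ • (a + a') = δ' • a' := by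
      rw [hadd, hz, hδ', zero_add]
    rcases hmem (a + a') with h0 | ⟨ε, hε⟩
    · exact ha' ((smul_eq_zero_iff_eq δ').1 (hval.symm.trans h0))
    · have heq : ε • a + ε • a' = δ' • a' := by rw [← smul_add, hε, hval]
      have h1 : ε • a = δ' • a' - ε • a' := by rw [← heq]; abel
      have hR : ε • a ∈ orbitZ Φ a' := by
        rw [h1]; exact submem a' (Or.inr ⟨δ', rfl⟩) (Or.inr ⟨ε, rfl⟩)
      have h0 : ε • a = 0 := disj a a' _ ha ha' hr (Or.inr ⟨ε, rfl⟩) hR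
      exact ha ((smul_eq_zero_iff_eq ε).1 h0)
  obtain ⟨a0, b0, ha0, hb0, hr0⟩ := horb
  by_cases hex : ∃ a : N, a ≠ 0 ∧ β • a + γ • a = 0
  · left
    obtain ⟨a, ha, hz⟩ := hex
    have hall : ∀ w : N, w ≠ 0 → S.rep w ≠ S.rep a → β • w + γ • w = 0 :=
      fun w hw hwr => zspread a w ha hw (Ne.symm hwr) hz
    intro n
    rcases eq_or_ne n 0 with rfl | hn
    · simp only [smul_zero, add_zero]
    rcases eq_or_ne (S.rep n) (S.rep a) with he | hne
    · have hw : ∃ w : N, w ≠ 0 ∧ S.rep w ≠ S.rep a := by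
        rcases eq_or_ne (S.rep a0) (S.rep a) with h1 | h1
        · exact ⟨b0, hb0, fun hc => hr0 (h1.trans hc.symm)⟩
        · exact ⟨a0, ha0, h1⟩
      obtain ⟨w, hw0, hwa⟩ := hw
      have hzw : β • w + γ • w = 0 := hall w hw0 hwa
      exact zspread w n hw0 hn (fun hc => hwa (hc.trans he)) hzw
    · exact hall n hn hne
  · push_neg at hex
    right
    obtain ⟨δ, hδ⟩ := hdec a0 ha0 (hex a0 ha0)
    obtain ⟨δb, hδb⟩ := hdec b0 hb0 (hex b0 hb0)
    refine ⟨δ, fun n => ?_⟩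
    rcases eq_or_ne n 0 with rfl | hn
    · simp only [smul_zero, add_zero]
    obtain ⟨δn, hδn⟩ := hdec n hn (hex n hn)
    rcases eq_or_ne (S.rep n) (S.rep a0) with he | hne
    · have h1 : δn = δb :=
        cross n b0 δn δb hn hb0 (fun hc => hr0 (he.symm.trans hc)) hδn hδb
      have h2 : δ = δb := cross a0 b0 δ δb ha0 hb0 hr0 hδ hδb
      rw [hδn, h1, ← h2]
    · have h1 : δn = δ := cross n a0 δn δ hn ha0 hne hδn hδ
      rw [hδn, h1]

end Aux

/-- a finite abelian planar nearring with more than one orbit, all of whose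
orbits `aΦ*` are additively closed, is a vector space over a subfield of `N`, with `Φ`
isomorphic to the multiplicative group of that field. -/
theorem stmt14 {Φ N : Type*} [Group Φ] [PlanarNearring N] [DistribMulAction Φ N]
    [Finite N] (S : FerreroStructure Φ N)
    (hab : ∀ x y : N, x + y = y + x)
    (horb : ∃ a b : N, a ≠ 0 ∧ b ≠ 0 ∧ S.rep a ≠ S.rep b)
    (hclosed : ∀ a : N, ∀ x ∈ orbitZ Φ a, ∀ y ∈ orbitZ Φ a, x + y ∈ orbitZ Φ a) :
    ∃ F : Set N, ∃ e ∈ F, e ≠ 0 ∧ (0 : N) ∈ F ∧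
      -- `F` is a subfield of `N`:
      (∀ f ∈ F, ∀ g ∈ F, f + g ∈ F) ∧ (∀ f ∈ F, -f ∈ F) ∧
      (∀ f ∈ F, ∀ g ∈ F, f * g ∈ F) ∧ (∀ f ∈ F, ∀ g ∈ F, f * g = g * f) ∧
      (∀ f ∈ F, e * f = f) ∧
      (∀ f ∈ F, f ≠ 0 → ∃ g ∈ F, g ≠ 0 ∧ f * g = e) ∧
      -- `N` is a vector space over `F` (scalars acting by right multiplication):
      (∀ n : N, n * e = n) ∧
      (∀ n : N, ∀ f ∈ F, ∀ g ∈ F, n * (f + g) = n * f + n * g) ∧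
      -- `Φ*` is isomorphic to the multiplicative group of `F`:
      (∃ ι : Φ → N, Function.Injective ι ∧ Set.range ι = F \ {0} ∧
        ∀ φ ψ : Φ, ι (φ * ψ) = ι φ * ι ψ) := by
  classical
  -- a representative of a non-zero-multiplier orbit
  have hbex : ∃ b : N, b ≠ 0 ∧ S.rep b ∉ S.M := by
    by_contra hc
    push_neg at hc
    obtain ⟨a, b, c, hab1, -, -⟩ := PlanarNearring.three_classes (N := N)
    apply hab1
    intro x
    have hz : ∀ y : N, x * y = 0 := by
      intro y
      rcases eq_or_ne y 0 with rfl | hy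
      · exact mulz' x
      · exact S.mul_zm x y hy (hc y hy)
    rw [hz, hz]
  obtain ⟨b1, hb1, hbM⟩ := hbex
  set e := S.rep b1 with he
  have heR : e ∈ S.R := S.rep_mem b1 hb1
  have he0 : e ≠ 0 := fun h => S.zero_not_mem (h ▸ heR)
  have heM : e ∉ S.M := hbM
  have hrep : ∀ φ : Φ, S.rep (φ • e) = e ∧ S.aut (φ • e) = φ := by
    intro φ
    have h0 : φ • e ≠ 0 := (smul_ne_zero_iff_ne φ).2 he0
    have h := S.unique (φ • e) h0 e heR φ rfl
    exact ⟨h.1.symm, h.2.symm⟩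
  set F : Set N := orbitZ Φ e with hF
  have hF0 : (0 : N) ∈ F := Or.inl rfl
  have hFe : e ∈ F := Or.inr ⟨1, one_smul _ _⟩
  have hsmulF : ∀ (χ : Φ), ∀ x ∈ F, χ • x ∈ F := by
    intro χ x hx
    rcases hx with h | ⟨φ, rfl⟩
    · exact Or.inl (by rw [h, smul_zero])
    · exact Or.inr ⟨χ * φ, mul_smul χ φ e⟩
  have hFadd : ∀ x ∈ F, ∀ y ∈ F, x + y ∈ F := hclosed e
  have hFneg : ∀ x ∈ F, -x ∈ F := fun x hx => neg_mem_orbitZ (hclosed e) hx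
  have hmem_decomp : ∀ x ∈ F, x ≠ 0 → x = S.aut x • e ∧ S.rep x = e := by
    intro x hx h0
    rcases hx with h | ⟨φ, rfl⟩
    · exact absurd h h0
    · exact ⟨by rw [(hrep φ).2], (hrep φ).1⟩
  have hmul : ∀ (n : N), ∀ y ∈ F, y ≠ 0 → n * y = S.aut y • n := by
    intro n y hy h0
    have hre : S.rep y = e := (hmem_decomp y hy h0).2
    exact S.mul_eq n y h0 (hre ▸ heM)
  have hFmul : ∀ x ∈ F, ∀ y ∈ F, x * y ∈ F := by
    intro x hx y hy
    rcases eq_or_ne y 0 with rfl | h0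
    · rw [mulz']; exact hF0
    · rw [hmul x y hy h0]; exact hsmulF _ x hx
  have haute : S.aut e = 1 := by
    have h := (hrep 1).2; rwa [one_smul] at h
  have hone : ∀ n : N, n * e = n := by
    intro n
    rw [hmul n e hFe he0, haute, one_smul]
  have honeml : ∀ f ∈ F, e * f = f := by
    intro f hf
    rcases eq_or_ne f 0 with rfl | h0
    · exact mulz' e
    · rw [hmul e f hf h0]
      exact ((hmem_decomp f hf h0).1).symm
  have hinv : ∀ f ∈ F, f ≠ 0 → ∃ g ∈ F, g ≠ 0 ∧ f * g = e := by
    intro f hf h0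
    refine ⟨(S.aut f)⁻¹ • e, hsmulF _ e hFe, (smul_ne_zero_iff_ne _).2 he0, ?_⟩
    rw [hmul f _ (hsmulF _ e hFe) ((smul_ne_zero_iff_ne _).2 he0), (hrep (S.aut f)⁻¹).2,
      inv_smul_eq_iff]
    exact (hmem_decomp f hf h0).1
  have hkey := key S hab horb hclosed
  have hdist : ∀ n : N, ∀ f ∈ F, ∀ g ∈ F, n * (f + g) = n * f + n * g := by
    intro n f hf g hg
    rcases eq_or_ne f 0 with rfl | hf0
    · rw [zero_add, mulz', zero_add]
    rcases eq_or_ne g 0 with rfl | hg0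
    · rw [add_zero, mulz', add_zero]
    have hfe := (hmem_decomp f hf hf0).1
    have hge := (hmem_decomp g hg hg0).1
    rcases hkey (S.aut f) (S.aut g) with hz | ⟨δ, hδ⟩
    · have hfg : f + g = 0 := by rw [hfe, hge]; exact hz e
      rw [hfg, mulz', hmul n f hf hf0, hmul n g hg hg0, hz n]
    · have hfg : f + g = δ • e := by rw [hfe, hge]; exact hδ e
      have hfgF : f + g ∈ F := hFadd f hf g hg
      have hfg0 : f + g ≠ 0 := by rw [hfg]; exact (smul_ne_zero_iff_ne δ).2 he0
      have haut : S.aut (f + g) = δ := by rw [hfg]; exact (hrep δ).2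
      rw [hmul n (f + g) hfgF hfg0, hmul n f hf hf0, hmul n g hg hg0, haut, hδ n]
  -- commutativity via Wedderburn's little theorem
  have hcomm : ∀ f ∈ F, ∀ g ∈ F, f * g = g * f := by
    letI : Zero ↥F := ⟨⟨0, hF0⟩⟩
    letI : Add ↥F := ⟨fun x y => ⟨x.1 + y.1, hFadd _ x.2 _ y.2⟩⟩
    letI : Neg ↥F := ⟨fun x => ⟨-x.1, hFneg _ x.2⟩⟩
    letI : One ↥F := ⟨⟨e, hFe⟩⟩
    letI : Mul ↥F := ⟨fun x y => ⟨x.1 * y.1, hFmul _ x.2 _ y.2⟩⟩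
    letI : AddCommGroup ↥F :=
      { add := (· + ·)
        zero := 0
        neg := Neg.neg
        add_assoc := fun a b c => Subtype.ext (add_assoc a.1 b.1 c.1)
        zero_add := fun a => Subtype.ext (zero_add a.1)
        add_zero := fun a => Subtype.ext (add_zero a.1)
        neg_add_cancel := fun a => Subtype.ext (neg_add_cancel a.1)
        add_comm := fun a b => Subtype.ext (hab a.1 b.1)
        nsmul := nsmulRec
        zsmul := zsmulRec }
    letI : Ring ↥F :=
      { (inferInstance : AddCommGroup ↥F) with
        mul := (· * ·)
        one := 1
        mul_assoc := fun a b c => Subtype.ext (RightNearring.mul_assoc a.1 b.1 c.1)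
        one_mul := fun a => Subtype.ext (honeml a.1 a.2)
        mul_one := fun a => Subtype.ext (hone a.1)
        left_distrib := fun a b c => Subtype.ext (hdist a.1 b.1 b.2 c.1 c.2)
        right_distrib := fun a b c => Subtype.ext (RightNearring.right_distrib a.1 b.1 c.1)
        zero_mul := fun a => Subtype.ext (zmul' a.1)
        mul_zero := fun a => Subtype.ext (mulz' a.1) }
    letI : Inv ↥F :=
      ⟨fun x => if h : (x.1 : N) = 0 then ⟨0, hF0⟩ else ⟨(S.aut x.1)⁻¹ • e, hsmulF _ e hFe⟩⟩
    letI : DivisionRing ↥F :=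
      { (inferInstance : Ring ↥F), (inferInstance : Inv ↥F) with
        exists_pair_ne := ⟨⟨0, hF0⟩, ⟨e, hFe⟩, fun hc => he0 (congrArg Subtype.val hc).symm⟩
        mul_inv_cancel := by
          intro a ha
          have h0 : (a.1 : N) ≠ 0 := fun hc => ha (Subtype.ext hc)
          have hi : (a⁻¹ : ↥F) = ⟨(S.aut a.1)⁻¹ • e, hsmulF _ e hFe⟩ := dif_neg h0
          apply Subtype.ext
          rw [hi]
          show a.1 * ((S.aut a.1)⁻¹ • e) = e
          rw [hmul a.1 _ (hsmulF _ e hFe) ((smul_ne_zero_iff_ne _).2 he0),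
            (hrep (S.aut a.1)⁻¹).2, inv_smul_eq_iff]
          exact (hmem_decomp a.1 a.2 h0).1
        inv_zero := dif_pos rfl
        nnqsmul := _
        qsmul := _ }
    haveI : Finite ↥F := Subtype.finite
    letI : Field ↥F := littleWedderburn ↥F
    intro f hf g hg
    exact congrArg Subtype.val (mul_comm (⟨f, hf⟩ : ↥F) ⟨g, hg⟩)
  refine ⟨F, e, hFe, he0, hF0, hFadd, hFneg, hFmul, hcomm, honeml, hinv, hone, hdist, ?_⟩
  refine ⟨fun φ => φ • e, ?_, ?_, ?_⟩
  · intro φ ψ hpe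
    have hpe' : φ • e = ψ • e := hpe
    have hx : (ψ⁻¹ * φ) • e = e := by rw [mul_smul, hpe', inv_smul_smul]
    have h1 : ψ⁻¹ * φ = 1 := by
      by_contra hc
      exact he0 (S.fpf _ hc e hx)
    rw [inv_mul_eq_one] at h1; exact h1.symm
  · ext x
    simp only [Set.mem_range, Set.mem_diff, Set.mem_singleton_iff]
    constructor
    · rintro ⟨φ, rfl⟩
      exact ⟨Or.inr ⟨φ, rfl⟩, (smul_ne_zero_iff_ne φ).2 he0⟩
    · rintro ⟨hxF, hx0⟩
      exact ⟨S.aut x, ((hmem_decomp x hxF hx0).1).symm⟩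
  · intro φ ψ
    show (φ * ψ) • e = (φ • e) * (ψ • e)
    have h2 : (ψ • e) * (φ • e) = φ • (ψ • e) := by
      rw [hmul _ _ (hsmulF φ e hFe) ((smul_ne_zero_iff_ne φ).2 he0), (hrep φ).2]
    have h3 := hcomm _ (hsmulF φ e hFe) _ (hsmulF ψ e hFe)
    rw [mul_smul, ← h2, ← h3]
end
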